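/- arXiv:2004.08383 — 3 statements merged into one kernel-verified Lean document; each statement's English description precedes it below -/
import Mathlib

section
/- For every integer m ≥ 2 there exists an unpredictable sequence: a sequence s ∈ Σ_m together with strictly increasing sequences of natural numbers (κ_n) and (ζ_n) such that (i) for every l ∈ ℕ there exists n with s(κ_n + i) = s(i) for all i < l, and (ii) s(κ_n + ζ_n) ≠ s(ζ_n) for every n. Moreover, such a sequence s is not periodic. -/
private lemma padic_key {a k : ℕ} (ha : 0 < a) (hak : a < 2 ^ k) :
    padicValNat 2 (a + 2 ^ k) = padicValNat 2 a := by
  have h2 : Fact (Nat.Prime 2) := ⟨Nat.prime_two⟩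
  set v := padicValNat 2 a with hv
  have hdvd : 2 ^ v ∣ a := pow_padicValNat_dvd
  have hvk : v < k := by
    have h1 : 2 ^ v ≤ a := Nat.le_of_dvd ha hdvd
    have := lt_of_le_of_lt h1 hak
    exact (Nat.pow_lt_pow_iff_right one_lt_two).mp this
  have hne : a + 2 ^ k ≠ 0 := by positivity
  have hle1 : v ≤ padicValNat 2 (a + 2 ^ k) := by
    rw [← padicValNat_dvd_iff_le hne]
    exact dvd_add hdvd (pow_dvd_pow 2 hvk.le)
  have hle2 : padicValNat 2 (a + 2 ^ k) ≤ v := by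
    by_contra h
    push_neg at h
    have hd1 : 2 ^ (v + 1) ∣ a + 2 ^ k := by
      rw [padicValNat_dvd_iff_le hne]; exact h
    have hd2 : 2 ^ (v + 1) ∣ 2 ^ k := pow_dvd_pow 2 (by omega)
    have hd3 : 2 ^ (v + 1) ∣ a := by
      have := Nat.dvd_sub hd1 hd2
      simpa using this
    have : v + 1 ≤ v := by
      rw [hv, ← padicValNat_dvd_iff_le ha.ne']; exact hd3
    omega
  omega

private lemma padic_pow (k : ℕ) : padicValNat 2 (2 ^ k) = k := by
  have h2 : Fact (Nat.Prime 2) := ⟨Nat.prime_two⟩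
  exact padicValNat.prime_pow k

/-- for every `m ≥ 2` there exists an unpredictable sequence in
`Σ_m = {0,…,m−1}^ℕ`: a sequence `s` with strictly increasing sequences `(κ_n)`, `(ζ_n)` of
naturals such that (i) for every `l` some shift `σ^{κ_n}` of `s` agrees with `s` on the first
`l` entries, (ii) `s (κ_n + ζ_n) ≠ s (ζ_n)` for every `n`; moreover `s` is not periodic. -/
theorem exists_unpredictable_sequence (m : ℕ) (hm : 2 ≤ m) :
    ∃ s : ℕ → Fin m, ∃ κ ζ : ℕ → ℕ,
      StrictMono κ ∧ StrictMono ζ ∧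
      (∀ l : ℕ, ∃ n : ℕ, ∀ i < l, s (κ n + i) = s i) ∧
      (∀ n : ℕ, s (κ n + ζ n) ≠ s (ζ n)) ∧
      ¬ (∃ q ≥ 1, ∀ i : ℕ, s (i + q) = s i) := by
  -- the period-doubling sequence
  set s : ℕ → Fin m := fun i => ⟨(padicValNat 2 (i + 1)) % 2, by omega⟩ with hs
  have skey : ∀ i j : ℕ, s i = s j ↔
      padicValNat 2 (i + 1) % 2 = padicValNat 2 (j + 1) % 2 := by
    intro i j
    simp [hs, Fin.ext_iff]
  refine ⟨s, fun n => 2 ^ (n + 1), fun n => 2 ^ (n + 1) - 1, ?_, ?_, ?_, ?_, ?_⟩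
  · exact fun a b hab => Nat.pow_lt_pow_right one_lt_two (by omega)
  · intro a b hab
    show 2 ^ (a + 1) - 1 < 2 ^ (b + 1) - 1
    have := Nat.pow_lt_pow_right one_lt_two (show a + 1 < b + 1 by omega)
    have ha : 1 ≤ 2 ^ (a + 1) := Nat.one_le_two_pow
    omega
  · intro l
    refine ⟨l, fun i hi => ?_⟩
    rw [skey]
    have h1 : i + 1 < 2 ^ (l + 1) := by
      have h2 : l < 2 ^ l := Nat.lt_two_pow_self
      have h3 : 2 ^ l ≤ 2 ^ (l + 1) := Nat.pow_le_pow_right (by norm_num) (by omega)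
      omega
    have h4 : 2 ^ (l + 1) + i + 1 = (i + 1) + 2 ^ (l + 1) := by ring
    rw [h4, padic_key (by omega) h1]
  · intro n
    rw [Ne, skey]
    have h1 : 2 ^ (n + 1) + (2 ^ (n + 1) - 1) + 1 = 2 ^ (n + 2) := by
      have : 1 ≤ 2 ^ (n + 1) := Nat.one_le_two_pow
      rw [pow_succ 2 (n + 1)]
      omega
    have h2 : 2 ^ (n + 1) - 1 + 1 = 2 ^ (n + 1) := by
      have : 1 ≤ 2 ^ (n + 1) := Nat.one_le_two_pow
      omega
    rw [h1, h2, padic_pow, padic_pow]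
    omega
  · rintro ⟨q, hq, hper⟩
    -- s (i + N*q) = s i
    have hiter : ∀ N i, s (i + N * q) = s i := by
      intro N
      induction N with
      | zero => simp
      | succ N ih =>
        intro i
        have : i + (N + 1) * q = (i + N * q) + q := by ring
        rw [this, hper, ih]
    -- s (2^t * q - 1) = s (q - 1)
    have hval : ∀ t : ℕ, padicValNat 2 (2 ^ t * q) % 2 = padicValNat 2 q % 2 → True := fun _ _ => trivial
    have key : ∀ t : ℕ, s (2 ^ t * q - 1) = s (q - 1) := by
      intro t
      have h1 : 1 ≤ 2 ^ t := Nat.one_le_two_pow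
      have h2 : 2 ^ t * q - 1 = (q - 1) + (2 ^ t - 1) * q := by
        have hq2 : q ≤ 2 ^ t * q := Nat.le_mul_of_pos_left q (by omega)
        rw [Nat.sub_mul, one_mul]
        omega
      rw [h2, hiter]
    have e1 := key 1
    have e2 := key 2
    have e12 : s (2 ^ 1 * q - 1) = s (2 ^ 2 * q - 1) := by rw [e1, e2]
    rw [skey] at e12
    have hq1 : 2 ^ 1 * q - 1 + 1 = 2 ^ 1 * q := by omega
    have hq2 : 2 ^ 2 * q - 1 + 1 = 2 ^ 2 * q := by
      have : q ≤ 2 ^ 2 * q := Nat.le_mul_of_pos_left q (by norm_num)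
      omega
    rw [hq1, hq2] at e12
    have hv1 : padicValNat 2 (2 ^ 1 * q) = 1 + padicValNat 2 q := by
      have h2 : Fact (Nat.Prime 2) := ⟨Nat.prime_two⟩
      rw [padicValNat.mul (by positivity) (by omega), padic_pow]
    have hv2 : padicValNat 2 (2 ^ 2 * q) = 2 + padicValNat 2 q := by
      have h2 : Fact (Nat.Prime 2) := ⟨Nat.prime_two⟩
      rw [padicValNat.mul (by positivity) (by omega), padic_pow]
    rw [hv1, hv2] at e12
    omega
end

section
/- The shift σ on (Σ_m, d) possesses an unpredictable point: there exist s ∈ Σ_m and strictly increasing sequences of natural numbers (κ_n) and (ζ_n) such that d(σ^{κ_n} s, s) → 0 as n → ∞ and d(σ^{κ_n + ζ_n} s, σ^{ζ_n} s) ≥ 1 for every n. -/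
/-- The one-sided shift map on `Σ_m = {0,…,m−1}^ℕ`. -/
def shift {m : ℕ} (s : ℕ → Fin m) : ℕ → Fin m := fun k => s (k + 1)

/-- The metric `d(s,t) = Σ_{k=0}^∞ |s_k − t_k| / 2^k` on `Σ_m`. -/
noncomputable def dS {m : ℕ} (s t : ℕ → Fin m) : ℝ :=
  ∑' k : ℕ, |((s k : ℕ) : ℝ) - ((t k : ℕ) : ℝ)| / 2 ^ k

/-- auxiliary value sequence: parity of the number of trailing ones of `k`. -/
def sval (k : ℕ) : ℕ := padicValNat 2 (k + 1) % 2

lemma sval_lt_two (k : ℕ) : sval k < 2 := Nat.mod_lt _ (by norm_num)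

lemma shift_iter {m : ℕ} (s : ℕ → Fin m) (j : ℕ) : ∀ k, (shift^[j] s) k = s (k + j) := by
  induction j generalizing s with
  | zero => intro k; simp
  | succ j ih =>
    intro k
    rw [Function.iterate_succ_apply, ih (shift s) k]
    simp [shift]
    ring_nf

lemma val_add_pow (n j : ℕ) (h1 : 0 < j) (h2 : j < 2 ^ n) :
    padicValNat 2 (2 ^ n + j) = padicValNat 2 j := by
  have : Fact (Nat.Prime 2) := ⟨Nat.prime_two⟩
  set v := padicValNat 2 j with hv
  have hdvd : 2 ^ v ∣ j := pow_padicValNat_dvd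
  have hnd : ¬ 2 ^ (v + 1) ∣ j := pow_succ_padicValNat_not_dvd (by omega)
  have hvn : v + 1 ≤ n := by
    have h2v : 2 ^ v ≤ j := Nat.le_of_dvd h1 hdvd
    have : 2 ^ v < 2 ^ n := lt_of_le_of_lt h2v h2
    exact (Nat.pow_lt_pow_iff_right (by norm_num)).mp this
  have hne : 2 ^ n + j ≠ 0 := by positivity
  apply le_antisymm
  · by_contra hlt
    push_neg at hlt
    have : 2 ^ (v + 1) ∣ 2 ^ n + j :=
      (padicValNat_dvd_iff_le hne).mpr hlt
    have : 2 ^ (v + 1) ∣ j := (Nat.dvd_add_right (pow_dvd_pow 2 hvn)).mp this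
    exact hnd this
  · rw [← padicValNat_dvd_iff_le hne]
    exact dvd_add (pow_dvd_pow 2 (by omega) |>.trans dvd_rfl) hdvd

lemma sval_add_pow (n k : ℕ) (h : k + 1 < 2 ^ n) : sval (k + 2 ^ n) = sval k := by
  unfold sval
  have : k + 2 ^ n + 1 = 2 ^ n + (k + 1) := by ring
  rw [this, val_add_pow n (k + 1) (by omega) h]

lemma sval_pow_sub_one (j : ℕ) : sval (2 ^ j - 1) = j % 2 := by
  have h : 0 < 2 ^ j := Nat.pow_pos (n := j) (by norm_num)
  unfold sval
  have : 2 ^ j - 1 + 1 = 2 ^ j := by omega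
  rw [this, padicValNat.prime_pow]

attribute [irreducible] sval

set_option maxHeartbeats 1000000 in
/-- the shift on `(Σ_m, d)` possesses an unpredictable point. -/
theorem shift_has_unpredictable_point (m : ℕ) (hm : 2 ≤ m) :
    ∃ s : ℕ → Fin m, ∃ κ ζ : ℕ → ℕ,
      StrictMono κ ∧ StrictMono ζ ∧
      Filter.Tendsto (fun n : ℕ => dS (shift^[κ n] s) s) Filter.atTop (nhds 0) ∧
      ∀ n : ℕ, 1 ≤ dS (shift^[κ n + ζ n] s) (shift^[ζ n] s) := by
  set s : ℕ → Fin m := fun k => ⟨sval k, lt_of_lt_of_le (sval_lt_two k) hm⟩ with hs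
  have hval : ∀ k, ((s k : ℕ) : ℝ) = (sval k : ℝ) := fun k => rfl
  have hsv1 : ∀ k, (sval k : ℝ) ≤ 1 := by
    intro k; have := sval_lt_two k
    exact_mod_cast Nat.lt_succ_iff.mp this
  have hsv0 : ∀ k, (0:ℝ) ≤ (sval k : ℝ) := fun k => Nat.cast_nonneg _
  -- generic summability
  have hsum : ∀ a b : ℕ,
      Summable (fun k : ℕ => |((s (k + a) : ℕ) : ℝ) - ((s (k + b) : ℕ) : ℝ)| / 2 ^ k) := by
    intro a b
    refine Summable.of_nonneg_of_le (fun k => by positivity) (fun k => ?_)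
      (summable_geometric_of_lt_one (show (0:ℝ) ≤ 1/2 by norm_num) (by norm_num))
    have h1 := hsv1 (k + a); have h2 := hsv1 (k + b)
    have h3 := hsv0 (k + a); have h4 := hsv0 (k + b)
    have habs : |((s (k + a) : ℕ) : ℝ) - ((s (k + b) : ℕ) : ℝ)| ≤ 1 := by
      rw [hval, hval, abs_sub_le_iff]; constructor <;> linarith
    have hpow : ((1:ℝ)/2) ^ k = 1 / 2 ^ k := by rw [div_pow, one_pow]
    rw [hpow]
    gcongr
  refine ⟨s, fun n => 2 ^ (n + 1), fun n => 2 ^ (n + 1) - 1, ?_, ?_, ?_, ?_⟩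
  · intro a b hab
    exact Nat.pow_lt_pow_right (by norm_num) (by omega)
  · intro a b hab
    show 2 ^ (a + 1) - 1 < 2 ^ (b + 1) - 1
    have h1 := Nat.pow_lt_pow_right (show 1 < 2 by norm_num) (show a + 1 < b + 1 by omega)
    have h2 : 0 < 2 ^ (a + 1) := Nat.pow_pos (by norm_num)
    omega
  · -- convergence: dS (shift^[2^(n+1)] s) s ≤ (1/2)^n
    have hbound : ∀ n : ℕ, dS (shift^[2 ^ (n + 1)] s) s ≤ (1/2 : ℝ) ^ n := by
      intro n
      have h0 : dS (shift^[2 ^ (n + 1)] s) s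
          = ∑' k : ℕ, |((s (k + 2 ^ (n + 1)) : ℕ) : ℝ) - ((s (k + 0) : ℕ) : ℝ)| / 2 ^ k := by
        unfold dS
        congr 1; funext k
        rw [shift_iter]; norm_num
      rw [h0]
      have hS := hsum (2 ^ (n + 1)) 0
      set f : ℕ → ℝ := fun k => |((s (k + 2 ^ (n + 1)) : ℕ) : ℝ) - ((s (k + 0) : ℕ) : ℝ)| / 2 ^ k
        with hf
      have hzero : ∀ k, k + 1 < 2 ^ (n + 1) → f k = 0 := by
        intro k hk
        have : sval (k + 2 ^ (n + 1)) = sval k := sval_add_pow (n + 1) k hk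
        simp only [hf, hval, this, add_zero, sub_self, abs_zero, zero_div]
      have hn2 : ∀ k, k < n + 1 → k + 1 < 2 ^ (n + 1) := by
        intro k hk
        have := Nat.lt_two_pow_self (n := n + 1)
        omega
      have := Summable.sum_add_tsum_nat_add (f := f) (n + 1) hS
      rw [← this]
      have hfin : ∑ i ∈ Finset.range (n + 1), f i = 0 := by
        apply Finset.sum_eq_zero
        intro i hi
        exact hzero i (hn2 i (Finset.mem_range.mp hi))
      rw [hfin, zero_add]
      have htail : ∑' i : ℕ, f (i + (n + 1)) ≤ ∑' i : ℕ, (1/2 : ℝ) ^ (i + (n + 1)) := by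
        apply Summable.tsum_le_tsum
        · intro i
          have h1 := hsv1 (i + (n + 1) + 2 ^ (n + 1)); have h2 := hsv1 (i + (n + 1) + 0)
          have h3 := hsv0 (i + (n + 1) + 2 ^ (n + 1)); have h4 := hsv0 (i + (n + 1) + 0)
          simp only [hf]
          have habs : |((s (i + (n + 1) + 2 ^ (n + 1)) : ℕ) : ℝ)
              - ((s (i + (n + 1) + 0) : ℕ) : ℝ)| ≤ 1 := by
            rw [hval, hval, abs_sub_le_iff]; constructor <;> linarith
          have hpow : ((1:ℝ)/2) ^ (i + (n + 1)) = 1 / 2 ^ (i + (n + 1)) := by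
            rw [div_pow, one_pow]
          rw [hpow]
          gcongr
        · exact (summable_nat_add_iff (n + 1)).mpr hS
        · exact (summable_nat_add_iff (n + 1)).mpr
            (summable_geometric_of_lt_one (by norm_num) (by norm_num))
      refine htail.trans ?_
      have : ∑' i : ℕ, (1/2 : ℝ) ^ (i + (n + 1))
          = (∑' i : ℕ, (1/2 : ℝ) ^ i) * (1/2) ^ (n + 1) := by
        rw [← tsum_mul_right]
        congr 1; funext i; rw [pow_add]
      rw [this, tsum_geometric_of_lt_one (by norm_num) (by norm_num)]
      rw [pow_succ]
      have : (2:ℝ) * ((1/2) ^ n * (1/2)) = (1/2) ^ n := by ring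
      linarith
    apply squeeze_zero
    · intro n
      unfold dS
      apply tsum_nonneg
      intro k; positivity
    · exact hbound
    · exact tendsto_pow_atTop_nhds_zero_of_lt_one (by norm_num) (by norm_num)
  · -- separation
    intro n
    have hκζ : 2 ^ (n + 1) + (2 ^ (n + 1) - 1) = 2 ^ (n + 2) - 1 := by
      have h1 : 0 < 2 ^ (n + 1) := Nat.pow_pos (by norm_num)
      have h2 : 2 ^ (n + 2) = 2 * 2 ^ (n + 1) := by ring
      omega
    have h0 : dS (shift^[2 ^ (n + 1) + (2 ^ (n + 1) - 1)] s) (shift^[2 ^ (n + 1) - 1] s)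
        = ∑' k : ℕ, |((s (k + (2 ^ (n + 2) - 1)) : ℕ) : ℝ)
            - ((s (k + (2 ^ (n + 1) - 1)) : ℕ) : ℝ)| / 2 ^ k := by
      unfold dS
      congr 1; funext k
      rw [shift_iter, shift_iter, hκζ]
    rw [h0]
    have hle := Summable.le_tsum (hsum (2 ^ (n + 2) - 1) (2 ^ (n + 1) - 1)) 0
      (fun i _ => by positivity)
    refine le_trans ?_ hle
    simp only [zero_add, pow_zero, div_one, hval, sval_pow_sub_one]
    rcases Nat.even_or_odd n with h | h
    · obtain ⟨c, hc⟩ := h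
      have e1 : (n + 2) % 2 = 0 := by omega
      have e2 : (n + 1) % 2 = 1 := by omega
      rw [e1, e2]; norm_num
    · obtain ⟨c, hc⟩ := h
      have e1 : (n + 2) % 2 = 1 := by omega
      have e2 : (n + 1) % 2 = 0 := by omega
      rw [e1, e2]; norm_num
end

section
/- The shift σ on (Σ_m, d) is Li–Yorke chaotic: there exists an uncountable set S ⊆ Σ_m containing no periodic sequence such that for all distinct s, t ∈ S, limsup_{k→∞} d(σ^k s, σ^k t) > 0 and liminf_{k→∞} d(σ^k s, σ^k t) = 0, and for every s ∈ S and every periodic p ∈ Σ_m, limsup_{k→∞} d(σ^k s, σ^k p) > 0. -/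
namespace LiYorkeAux

lemma shift_iter {m : ℕ} (s : ℕ → Fin m) (q k : ℕ) : shift^[q] s k = s (k + q) := by
  induction q generalizing s k with
  | zero => simp
  | succ q ih =>
    rw [Function.iterate_succ_apply, ih]
    show s (k + q + 1) = s (k + (q + 1))
    congr 1

lemma term_le {m : ℕ} (s t : ℕ → Fin m) (k : ℕ) :
    |((s k : ℕ) : ℝ) - ((t k : ℕ) : ℝ)| / 2 ^ k ≤ ((m : ℝ) - 1) * (1/2) ^ k := by
  have h1 : (s k : ℕ) + 1 ≤ m := (s k).is_lt
  have h2 : (t k : ℕ) + 1 ≤ m := (t k).is_lt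
  have h1' : ((s k : ℕ) : ℝ) + 1 ≤ (m : ℝ) := by exact_mod_cast h1
  have h2' : ((t k : ℕ) : ℝ) + 1 ≤ (m : ℝ) := by exact_mod_cast h2
  have hs0 : (0:ℝ) ≤ ((s k : ℕ) : ℝ) := Nat.cast_nonneg _
  have ht0 : (0:ℝ) ≤ ((t k : ℕ) : ℝ) := Nat.cast_nonneg _
  have habs : |((s k : ℕ) : ℝ) - ((t k : ℕ) : ℝ)| ≤ (m : ℝ) - 1 := by
    rw [abs_sub_le_iff]; constructor <;> linarith
  have hpow : (0:ℝ) < 2 ^ k := by positivity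
  rw [div_eq_mul_inv]
  have : ((2:ℝ) ^ k)⁻¹ = (1/2) ^ k := by
    rw [one_div, inv_pow]
  rw [this]
  apply mul_le_mul_of_nonneg_right habs (by positivity)

lemma summable_term {m : ℕ} (s t : ℕ → Fin m) :
    Summable (fun k => |((s k : ℕ) : ℝ) - ((t k : ℕ) : ℝ)| / 2 ^ k) := by
  apply Summable.of_nonneg_of_le (fun k => by positivity) (term_le s t)
  exact (summable_geometric_of_lt_one (by norm_num) (by norm_num)).mul_left _

lemma dS_nonneg {m : ℕ} (s t : ℕ → Fin m) : 0 ≤ dS s t :=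
  tsum_nonneg (fun k => by positivity)

lemma dS_le {m : ℕ} (s t : ℕ → Fin m) : dS s t ≤ ((m : ℝ) - 1) * 2 := by
  have := Summable.tsum_le_tsum (term_le s t) (summable_term s t)
    ((summable_geometric_of_lt_one (by norm_num) (by norm_num)).mul_left _)
  rw [tsum_mul_left, tsum_geometric_two] at this
  exact this

lemma one_le_dS {m : ℕ} {s t : ℕ → Fin m} (h : s 0 ≠ t 0) : 1 ≤ dS s t := by
  have hne : (s 0 : ℕ) ≠ (t 0 : ℕ) := fun hc => h (Fin.ext hc)
  have h1 : (1:ℤ) ≤ |((s 0 : ℕ) : ℤ) - ((t 0 : ℕ) : ℤ)| :=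
    Int.one_le_abs (by omega)
  have h1' : (1:ℝ) ≤ |((s 0 : ℕ) : ℝ) - ((t 0 : ℕ) : ℝ)| := by exact_mod_cast h1
  have hterm := Summable.le_tsum (summable_term s t) 0 (fun j _ => by positivity)
  simp only [pow_zero, div_one] at hterm
  exact le_trans h1' hterm

lemma dS_agree {m : ℕ} {s t : ℕ → Fin m} {n : ℕ} (h : ∀ j < n, s j = t j) :
    dS s t ≤ ((m : ℝ) - 1) * (1/2) ^ n * 2 := by
  set f : ℕ → ℝ := fun k => |((s k : ℕ) : ℝ) - ((t k : ℕ) : ℝ)| / 2 ^ k with hf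
  have hsum : Summable f := summable_term s t
  have hsplit := Summable.sum_add_tsum_nat_add n hsum
  have hzero : ∑ i ∈ Finset.range n, f i = 0 := by
    apply Finset.sum_eq_zero
    intro i hi
    have := h i (Finset.mem_range.1 hi)
    simp [hf, this]
  have hshift : Summable (fun k => f (k + n)) := (summable_nat_add_iff n).2 hsum
  have hgeom : Summable (fun k : ℕ => (((m : ℝ) - 1) * (1/2) ^ n) * (1/2) ^ k) :=
    (summable_geometric_of_lt_one (by norm_num) (by norm_num)).mul_left _
  have hle : ∑' k, f (k + n) ≤ ∑' k : ℕ, (((m : ℝ) - 1) * (1/2) ^ n) * (1/2) ^ k := by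
    apply Summable.tsum_le_tsum _ hshift hgeom
    intro k
    have := term_le s t (k + n)
    calc f (k + n) ≤ ((m : ℝ) - 1) * (1/2) ^ (k + n) := this
      _ = (((m : ℝ) - 1) * (1/2) ^ n) * (1/2) ^ k := by rw [pow_add]; ring
  rw [tsum_mul_left, tsum_geometric_two] at hle
  have : dS s t = ∑' k, f (k + n) := by
    rw [dS, ← hsplit, hzero, zero_add]
  rw [this]
  linarith



/-- The scrambled-set member associated to `A : ℕ → Bool`. -/
def sA (m : ℕ) (hm : 2 ≤ m) (A : ℕ → Bool) (k : ℕ) : Fin m :=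
  if Nat.sqrt k * Nat.sqrt k = k then
    if Nat.sqrt k % 2 = 1 then ⟨1, by omega⟩
    else if A (Nat.unpair (Nat.sqrt k / 2)).1 then ⟨1, by omega⟩ else ⟨0, by omega⟩
  else ⟨0, by omega⟩

lemma sA_val_nonsq {m : ℕ} (hm : 2 ≤ m) (A : ℕ → Bool) {k : ℕ}
    (h : ¬ (Nat.sqrt k * Nat.sqrt k = k)) : (sA m hm A k : ℕ) = 0 := by
  rw [sA, if_neg h]

lemma sA_val_oddsq {m : ℕ} (hm : 2 ≤ m) (A : ℕ → Bool) (j : ℕ) :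
    (sA m hm A ((2*j+1) * (2*j+1)) : ℕ) = 1 := by
  rw [sA]
  rw [Nat.sqrt_eq]
  rw [if_pos rfl, if_pos (by omega)]

lemma sA_val_evensq {m : ℕ} (hm : 2 ≤ m) (A : ℕ → Bool) (w : ℕ) :
    (sA m hm A ((2*w) * (2*w)) : ℕ) = if A (Nat.unpair w).1 then 1 else 0 := by
  rw [sA]
  rw [Nat.sqrt_eq]
  rw [if_pos rfl, if_neg (by omega)]
  have : 2 * w / 2 = w := by omega
  rw [this]
  split <;> rfl

lemma not_sq_of_between {i r : ℕ} (h1 : i * i < r) (h2 : r < (i+1) * (i+1)) :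
    ¬ (Nat.sqrt r * Nat.sqrt r = r) := by
  intro h
  have hlt : i < Nat.sqrt r := Nat.mul_self_lt_mul_self_iff.1 (by omega)
  have hlt2 : Nat.sqrt r < i + 1 := Nat.mul_self_lt_mul_self_iff.1 (by omega)
  omega

lemma periodic_step {m : ℕ} {p : ℕ → Fin m} {q : ℕ} (hp : shift^[q] p = p) (k t : ℕ) :
    p (k + t * q) = p k := by
  induction t with
  | zero => simp
  | succ t ih =>
    have h1 : shift^[q] p (k + t * q) = p (k + t * q) := by rw [hp]
    rw [shift_iter] at h1
    have : k + (t+1) * q = k + t * q + q := by ring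
    rw [this, h1, ih]

/-- Main contradiction: a member of `S` cannot eventually agree with a periodic sequence. -/
lemma key {m : ℕ} (hm : 2 ≤ m) (A : ℕ → Bool) (p : ℕ → Fin m) (q : ℕ) (hq : 1 ≤ q)
    (hp : shift^[q] p = p) (K : ℕ) (H : ∀ k ≥ K, sA m hm A k = p k) : False := by
  -- position with a 1
  have hk1K : K ≤ (2*K+1) * (2*K+1) := by
    calc K ≤ 2*K+1 := by omega
      _ ≤ (2*K+1) * (2*K+1) := Nat.le_mul_of_pos_left _ (by omega)
  set k1 := (2*K+1) * (2*K+1) with hk1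
  have hv1 : (sA m hm A k1 : ℕ) = 1 := sA_val_oddsq hm A K
  -- a big gap
  set i := q + 2*K + 1 with hi
  have hik1 : k1 ≤ i * i := Nat.mul_le_mul (by omega) (by omega)
  -- land k1 + t*q inside the gap (i*i, (i+1)*(i+1))
  obtain ⟨t, hgt, hle⟩ : ∃ t, i * i < k1 + t * q ∧ k1 + t * q ≤ i * i + q := by
    refine ⟨(i * i - k1) / q + 1, ?_, ?_⟩ <;>
    · have h2 : (i * i - k1) / q * q + (i * i - k1) % q = i * i - k1 := by
        rw [mul_comm]; exact Nat.div_add_mod _ _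
      have h3 : (i * i - k1) % q < q := Nat.mod_lt _ (by omega)
      have h4 : ((i * i - k1) / q + 1) * q = (i * i - k1) / q * q + q := by ring
      omega
  have hlt : k1 + t * q < (i+1) * (i+1) := by
    have h4 : (i+1) * (i+1) = i * i + 2 * i + 1 := by ring
    omega
  have hv2 : (sA m hm A (k1 + t * q) : ℕ) = 0 :=
    sA_val_nonsq hm A (not_sq_of_between hgt hlt)
  have hKk2 : K ≤ k1 + t * q := by omega
  have e1 : sA m hm A k1 = p k1 := H k1 hk1K
  have e2 : sA m hm A (k1 + t * q) = p (k1 + t * q) := H _ hKk2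
  have e3 : p (k1 + t * q) = p k1 := periodic_step hp k1 t
  have : (sA m hm A k1 : ℕ) = (sA m hm A (k1 + t * q) : ℕ) := by rw [e1, e2, e3]
  omega



lemma sA_injective (m : ℕ) (hm : 2 ≤ m) : Function.Injective (sA m hm) := by
  intro A B hAB
  funext n
  by_contra hn
  have h := congrFun hAB ((2 * Nat.pair n 0) * (2 * Nat.pair n 0))
  have hA := sA_val_evensq hm A (Nat.pair n 0)
  have hB := sA_val_evensq hm B (Nat.pair n 0)
  rw [Nat.unpair_pair] at hA hB
  rw [h] at hA
  rw [hA] at hB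
  cases hA' : A n <;> cases hB' : B n <;> simp_all

/-- If two sequences differ at infinitely many coordinates, the limsup of orbit
distances is positive. -/
lemma limsup_pos {m : ℕ} {u v : ℕ → Fin m}
    (H : ∀ K, ∃ k ≥ K, u k ≠ v k) :
    0 < Filter.limsup (fun k : ℕ => dS (shift^[k] u) (shift^[k] v)) Filter.atTop := by
  have hbdd : Filter.IsBoundedUnder (· ≤ ·) Filter.atTop
      (fun k : ℕ => dS (shift^[k] u) (shift^[k] v)) :=
    Filter.isBoundedUnder_of ⟨((m : ℝ) - 1) * 2, fun k => dS_le _ _⟩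
  have hfreq : ∃ᶠ k in Filter.atTop,
      (1:ℝ) ≤ dS (shift^[k] u) (shift^[k] v) := by
    rw [Filter.frequently_atTop]
    intro K
    obtain ⟨k, hk, hne⟩ := H K
    refine ⟨k, hk, one_le_dS ?_⟩
    rw [shift_iter, shift_iter, Nat.zero_add]
    exact hne
  have := Filter.le_limsup_of_frequently_le hfreq hbdd
  linarith



lemma freq_ne {m : ℕ} (hm : 2 ≤ m) {A B : ℕ → Bool} (hAB : A ≠ B) :
    ∀ K, ∃ k ≥ K, sA m hm A k ≠ sA m hm B k := by
  obtain ⟨n, hn⟩ : ∃ n, A n ≠ B n := by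
    by_contra h; push_neg at h; exact hAB (funext h)
  intro K
  refine ⟨(2 * Nat.pair n K) * (2 * Nat.pair n K), ?_, ?_⟩
  · have h1 : K ≤ Nat.pair n K := Nat.right_le_pair _ _
    nlinarith [Nat.pair n K]
  · intro h
    have hA := sA_val_evensq hm A (Nat.pair n K)
    have hB := sA_val_evensq hm B (Nat.pair n K)
    rw [Nat.unpair_pair] at hA hB
    rw [h] at hA
    rw [hA] at hB
    cases hA' : A n <;> cases hB' : B n <;> simp_all

lemma freq_ne_periodic {m : ℕ} (hm : 2 ≤ m) (A : ℕ → Bool) {p : ℕ → Fin m} {q : ℕ}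
    (hq : 1 ≤ q) (hp : shift^[q] p = p) :
    ∀ K, ∃ k ≥ K, sA m hm A k ≠ p k := by
  intro K
  by_contra h
  push_neg at h
  exact key hm A p q hq hp K h

lemma liminf_zero {m : ℕ} (hm : 2 ≤ m) (A B : ℕ → Bool) :
    Filter.liminf
      (fun k : ℕ => dS (shift^[k] (sA m hm A)) (shift^[k] (sA m hm B)))
      Filter.atTop = 0 := by
  set f : ℕ → ℝ := fun k => dS (shift^[k] (sA m hm A)) (shift^[k] (sA m hm B)) with hf
  have h0 : ∀ k, 0 ≤ f k := fun k => dS_nonneg _ _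
  have hbddge : Filter.IsBoundedUnder (· ≥ ·) Filter.atTop f :=
    Filter.isBoundedUnder_of ⟨0, h0⟩
  have hbddle : Filter.IsBoundedUnder (· ≤ ·) Filter.atTop f :=
    Filter.isBoundedUnder_of ⟨((m : ℝ) - 1) * 2, fun k => dS_le _ _⟩
  apply le_antisymm
  · apply le_of_forall_pos_le_add
    intro ε hε
    rw [zero_add]
    apply Filter.liminf_le_of_frequently_le _ hbddge
    rw [Filter.frequently_atTop]
    intro K
    have hm2 : (0:ℝ) < 2 * (m:ℝ) := by
      have : (2:ℝ) ≤ (m:ℝ) := by exact_mod_cast hm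
      linarith
    obtain ⟨n0, hn0⟩ := exists_pow_lt_of_lt_one
      (show (0:ℝ) < ε / (2 * (m:ℝ)) by positivity) (by norm_num : (1/2:ℝ) < 1)
    set i := max K n0 + 1 with hi
    refine ⟨i * i + 1, ?_, ?_⟩
    · have : K ≤ i := by omega
      nlinarith
    · -- agreement on the first 2*i - 1 coordinates
      have hagree : ∀ j < 2 * i - 1,
          shift^[i * i + 1] (sA m hm A) j = shift^[i * i + 1] (sA m hm B) j := by
        intro j hj
        rw [shift_iter, shift_iter]
        have hgt : i * i < j + (i * i + 1) := by omega
        have hlt : j + (i * i + 1) < (i + 1) * (i + 1) := by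
          have : (i+1) * (i+1) = i * i + 2 * i + 1 := by ring
          omega
        have hns := not_sq_of_between hgt hlt
        have h1 := sA_val_nonsq hm A hns
        have h2 := sA_val_nonsq hm B hns
        exact Fin.ext (by rw [h1, h2])
      have hle := dS_agree (m := m) hagree
      refine le_trans hle ?_
      -- ((m-1) * (1/2)^(2i-1) * 2 ≤ ε
      have hn0i : n0 ≤ 2 * i - 1 := by omega
      have hpow : ((1:ℝ)/2) ^ (2 * i - 1) ≤ ((1:ℝ)/2) ^ n0 :=
        pow_le_pow_of_le_one (by norm_num) (by norm_num) hn0i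
      have hml : (0:ℝ) ≤ (m:ℝ) - 1 := by
        have : (1:ℝ) ≤ (m:ℝ) := by exact_mod_cast (by omega : 1 ≤ m)
        linarith
      have hmul : ((m:ℝ) - 1) * ((1:ℝ)/2) ^ (2 * i - 1) * 2 ≤ 2 * (m:ℝ) * (((1:ℝ)/2) ^ n0) := by
        have hp0 : (0:ℝ) ≤ ((1:ℝ)/2) ^ (2 * i - 1) := by positivity
        nlinarith
      have hfin : 2 * (m:ℝ) * (((1:ℝ)/2) ^ n0) ≤ ε := by
        have h5 := (lt_div_iff₀ hm2).1 hn0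
        nlinarith
      linarith
  · exact Filter.le_liminf_of_le (Filter.IsBoundedUnder.isCoboundedUnder_ge hbddle)
      (Filter.Eventually.of_forall h0)

lemma range_not_countable (m : ℕ) (hm : 2 ≤ m) :
    ¬ (Set.range (sA m hm)).Countable := by
  intro hc
  have hsub : Countable ↥(Set.range (sA m hm)) := hc.to_subtype
  have hinj : Function.Injective
      (fun A : ℕ → Bool => (⟨sA m hm A, Set.mem_range_self A⟩ : Set.range (sA m hm))) := by
    intro A B h
    exact sA_injective m hm (Subtype.ext_iff.1 h)
  have : Countable (ℕ → Bool) := hinj.countable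
  have : Countable (Set ℕ) :=
    Countable.of_equiv _ (Equiv.arrowCongr (Equiv.refl ℕ) Equiv.propEquivBool).symm
  obtain ⟨g, hg⟩ := (countable_iff_exists_injective (Set ℕ)).1 this
  exact Function.cantor_injective g hg

end LiYorkeAux

/-- the shift on `(Σ_m, d)` is Li–Yorke chaotic: there is an uncountable set `S`
containing no periodic sequence such that distinct members of `S` have positive limsup and zero
liminf of mutual distances along orbits, and every member of `S` has positive limsup of
distances from every periodic orbit. -/
theorem shift_li_yorke_chaotic (m : ℕ) (hm : 2 ≤ m) :
    ∃ S : Set (ℕ → Fin m), ¬ S.Countable ∧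
      (∀ s ∈ S, ¬ ∃ q ≥ 1, shift^[q] s = s) ∧
      (∀ s ∈ S, ∀ t ∈ S, s ≠ t →
        0 < Filter.limsup (fun k : ℕ => dS (shift^[k] s) (shift^[k] t)) Filter.atTop ∧
        Filter.liminf (fun k : ℕ => dS (shift^[k] s) (shift^[k] t)) Filter.atTop = 0) ∧
      (∀ s ∈ S, ∀ p : ℕ → Fin m, (∃ q ≥ 1, shift^[q] p = p) →
        0 < Filter.limsup (fun k : ℕ => dS (shift^[k] s) (shift^[k] p)) Filter.atTop) := by
  refine ⟨Set.range (LiYorkeAux.sA m hm), LiYorkeAux.range_not_countable m hm, ?_, ?_, ?_⟩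
  · rintro s ⟨A, rfl⟩ ⟨q, hq, hper⟩
    exact LiYorkeAux.key hm A _ q hq hper 0 (fun k _ => rfl)
  · rintro s ⟨A, rfl⟩ t ⟨B, rfl⟩ hst
    have hAB : A ≠ B := fun h => hst (by rw [h])
    exact ⟨LiYorkeAux.limsup_pos (LiYorkeAux.freq_ne hm hAB),
      LiYorkeAux.liminf_zero hm A B⟩
  · rintro s ⟨A, rfl⟩ p ⟨q, hq, hp⟩
    exact LiYorkeAux.limsup_pos (LiYorkeAux.freq_ne_periodic hm A hq hp)
end
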